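/- arXiv:2501.12808 — 2 statements merged into one kernel-verified Lean document; each statement's English description precedes it below -/
import Mathlib

section
/- Let G be a unimodular, locally compact second countable, compactly generated group with compact symmetric generating set S. Suppose there exist a real Hilbert space H, a strongly continuous representation π : G → O(H) by surjective linear isometries and a 1-cocycle b ∈ Z¹(G, π) such that (inf{‖b(g)‖ : g ∈ G, |g|_S = n}) / √n → ∞ as n → ∞ (with the convention that the infimum over the empty set is +∞). Then for every cohomologically adapted probability measure μ on G with compact support, the drift vanishes: inf_{n ≥ 1} (1/n) ∫_G |g|_S dμ^{*n}(g) = 0. -/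
open Pointwise
open scoped ENNReal

noncomputable section

/-- The word length of `g` with respect to a generating set `S`:
`|g|_S = min {n : g ∈ Sⁿ}`. -/
def wordLength {G : Type*} [Monoid G] (S : Set G) (g : G) : ℕ :=
  sInf {n : ℕ | g ∈ S ^ n}

/-- The `n`-fold convolution power `μ^{*n}` of a measure on a group
(with `μ^{*0} = δ₁`). -/
def convPow {G : Type*} [Monoid G] [MeasurableSpace G]
    (μ : MeasureTheory.Measure G) : ℕ → MeasureTheory.Measure G
  | 0 => MeasureTheory.Measure.dirac 1
  | n + 1 => MeasureTheory.Measure.map (fun q : G × G => q.1 * q.2)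
      ((convPow μ n).prod μ)

/-- A Borel probability measure `μ` on a locally compact compactly generated group `G`
with compact symmetric generating set `S` is cohomologically adapted if it is symmetric,
absolutely continuous with respect to the Haar measure, its support contains `S`, its
density is essentially bounded below by a positive constant on `S`, and it has finite
`p`-moments for all `1 ≤ p < ∞`. -/
structure CohomologicallyAdapted {G : Type*} [Group G] [TopologicalSpace G]
    [IsTopologicalGroup G] [LocallyCompactSpace G] [MeasurableSpace G] [BorelSpace G]
    (S : Set G) (μ : MeasureTheory.Measure G) : Prop where
  isProb : MeasureTheory.IsProbabilityMeasure μ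
  symmetric : MeasureTheory.Measure.map (fun g => g⁻¹) μ = μ
  absCont : μ.AbsolutelyContinuous MeasureTheory.Measure.haar
  suppContains : ∀ g ∈ S, ∀ U : Set G, IsOpen U → g ∈ U → 0 < μ U
  densityBounded : ∃ ε : ℝ≥0∞, 0 < ε ∧
    ∀ᵐ x ∂((MeasureTheory.Measure.haar : MeasureTheory.Measure G).restrict S),
      ε ≤ μ.rnDeriv MeasureTheory.Measure.haar x
  finiteMoments : ∀ p : ℝ, 1 ≤ p →
    MeasureTheory.Integrable (fun g => (wordLength S g : ℝ) ^ p) μ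

/-- A strongly continuous unitary representation of `G` on a real Hilbert space with a
continuous 1-cocycle whose equivariant compression grows strictly faster than `√n`:
`inf_{|g|_S = n} ‖b(g)‖ / √n → ∞` (with `inf ∅ = +∞`). -/
structure SuperSqrtCocycle (G : Type*) [Group G] [TopologicalSpace G] (S : Set G) where
  H : Type
  [ng : NormedAddCommGroup H]
  [ip : InnerProductSpace ℝ H]
  [cs : CompleteSpace H]
  π : G →* (H ≃ₗᵢ[ℝ] H)
  strongCont : ∀ x : H, Continuous fun g : G => π g x
  b : G → H
  bCont : Continuous b
  cocycle : ∀ g h : G, b (g * h) = b g + π g (b h)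
  fast : ∀ M : ℝ, ∃ N : ℕ, ∀ n : ℕ, N ≤ n → ∀ g : G, wordLength S g = n →
    M * Real.sqrt n ≤ ‖b g‖


/-! For symmetric `μ` the averaging operator `P v = ∫ π g v dμ` is a self-adjoint contraction, and
`∫ b dμ^{*n} = ∑_{k<n} P^k β` with `β = ∫ b dμ`; pairing consecutive powers shows that this vector
has nonnegative inner product with `β`. Expanding `‖b (x y)‖²` by the cocycle identity therefore
gives `∫ ‖b‖² dμ^{*(n+1)} ≤ ∫ ‖b‖² dμ^{*n} + ∫ ‖b‖² dμ`, i.e. `∫ ‖b‖² dμ^{*n} ≤ n ∫ ‖b‖² dμ`.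
Since `‖b g‖ ≥ M √|g|_S` once `|g|_S ≥ N`, we have `|g|_S ≤ N + ‖b g‖² / M²`, so the drift is at
most `∫ ‖b‖² dμ / M²` for every `M`. -/

open MeasureTheory
open scoped RealInnerProductSpace

theorem mem_pow_wordLength {G : Type*} [Monoid G] {S : Set G}
    (hS : ∀ g : G, ∃ n : ℕ, g ∈ S ^ n) (g : G) : g ∈ S ^ wordLength S g :=
  Nat.sInf_mem (hS g)

theorem le_add_sq_div_sq_of_mul_sqrt_le {k N : ℕ} {M r : ℝ} (hM : 0 < M)
    (h : N ≤ k → M * √k ≤ r) : (k : ℝ) ≤ N + r ^ 2 / M ^ 2 := by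
  by_cases hk : N ≤ k
  · have h_sq : M ^ 2 * k ≤ r ^ 2 := by
      calc M ^ 2 * k = (M * √k) ^ 2 := by rw [mul_pow, Real.sq_sqrt (Nat.cast_nonneg k)]
        _ ≤ r ^ 2 := pow_le_pow_left₀ (by positivity) (h hk) 2
    have : (k : ℝ) ≤ r ^ 2 / M ^ 2 := by rw [le_div_iff₀ (by positivity)]; linarith
    linarith [(Nat.cast_nonneg N : (0 : ℝ) ≤ N)]
  · have : (k : ℝ) ≤ N := by exact_mod_cast (not_le.1 hk).le
    linarith [div_nonneg (sq_nonneg r) (sq_nonneg M)]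

theorem sInf_inv_mul_eq_zero_of_sublinear (a : ℕ → ℝ) (ha : ∀ n, 0 ≤ a n)
    (h : ∀ δ > 0, ∃ C : ℝ, ∀ n, a n ≤ C + δ * n) :
    sInf {x : ℝ | ∃ n : ℕ, 1 ≤ n ∧ x = (1 / (n : ℝ)) * a n} = 0 := by
  set T := {x : ℝ | ∃ n : ℕ, 1 ≤ n ∧ x = (1 / (n : ℝ)) * a n}
  have hT_nonneg : ∀ x ∈ T, 0 ≤ x := by
    rintro x ⟨n, -, rfl⟩
    exact mul_nonneg (by positivity) (ha n)
  refine le_antisymm (le_of_forall_pos_lt_add fun ε hε => ?_)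
    (le_csInf ⟨_, 1, le_rfl, rfl⟩ hT_nonneg)
  obtain ⟨C, hC⟩ := h (ε / 2) (half_pos hε)
  obtain ⟨n, hn⟩ := exists_nat_gt (2 * C / ε)
  have hn₀ : (0 : ℝ) < n + 1 := by positivity
  have hC_lt : C / (n + 1) < ε / 2 := by
    rw [div_lt_iff₀ hn₀]
    rw [div_lt_iff₀ hε] at hn
    linarith
  refine csInf_lt_of_lt ⟨0, hT_nonneg⟩ ⟨n + 1, le_add_self, rfl⟩ ?_
  push_cast
  calc 1 / (n + 1 : ℝ) * a (n + 1) ≤ 1 / (n + 1) * (C + ε / 2 * (n + 1 : ℕ)) := by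
        gcongr
        exact hC (n + 1)
    _ = C / (n + 1) + ε / 2 := by push_cast; field_simp
    _ < 0 + ε := by linarith

section Cocycle

variable {G : Type*} [Group G] {H : Type*} [NormedAddCommGroup H] [InnerProductSpace ℝ H]
  {π : G →* (H ≃ₗᵢ[ℝ] H)} {b : G → H}

theorem inner_map_inv_apply (g : G) (v w : H) :
    ⟪π g⁻¹ v, w⟫ = ⟪v, π g w⟫ := by
  rw [map_inv, LinearIsometryEquiv.coe_inv, LinearIsometryEquiv.inner_map_eq_flip,
    LinearIsometryEquiv.symm_symm]

theorem cocycle_one (hb : ∀ g h : G, b (g * h) = b g + π g (b h)) : b 1 = 0 := by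
  simpa using hb 1 1

theorem inner_cocycle_apply (hb : ∀ g h : G, b (g * h) = b g + π g (b h)) (g : G) (v : H) :
    ⟪b g, π g v⟫ = -⟪b g⁻¹, v⟫ := by
  have hinv : b g⁻¹ = -π g⁻¹ (b g) := by
    have h := hb g⁻¹ g
    rw [inv_mul_cancel, cocycle_one hb] at h
    exact eq_neg_of_add_eq_zero_left h.symm
  rw [hinv, inner_neg_left, neg_neg, inner_map_inv_apply]

theorem norm_sq_cocycle_mul (hb : ∀ g h : G, b (g * h) = b g + π g (b h)) (g h : G) :
    ‖b (g * h)‖ ^ 2 = ‖b g‖ ^ 2 + ‖b h‖ ^ 2 - 2 * ⟪b g⁻¹, b h⟫ := by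
  rw [hb, norm_add_sq_real, inner_cocycle_apply hb, (π g).norm_map]
  ring

theorem norm_cocycle_le_of_mem_pow (hb : ∀ g h : G, b (g * h) = b g + π g (b h))
    {S : Set G} {C : ℝ} (hC : ∀ s ∈ S, ‖b s‖ ≤ C) :
    ∀ n : ℕ, ∀ g ∈ S ^ n, ‖b g‖ ≤ n * C
  | 0, g, hg => by
    rw [pow_zero, Set.mem_one] at hg
    simp [hg, cocycle_one hb]
  | n + 1, _, ⟨x, hx, s, hs, rfl⟩ => by
    rw [hb, Nat.cast_succ, add_one_mul]
    calc ‖b x + π x (b s)‖ ≤ ‖b x‖ + ‖b s‖ := (norm_add_le _ _).trans_eq (by rw [(π x).norm_map])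
      _ ≤ n * C + C := add_le_add (norm_cocycle_le_of_mem_pow hb hC n x hx) (hC s hs)

theorem norm_cocycle_le_mul_wordLength (hb : ∀ g h : G, b (g * h) = b g + π g (b h))
    {S : Set G} (hS : ∀ g : G, ∃ n : ℕ, g ∈ S ^ n) {C : ℝ} (hC : ∀ s ∈ S, ‖b s‖ ≤ C) (g : G) :
    ‖b g‖ ≤ wordLength S g * C :=
  norm_cocycle_le_of_mem_pow hb hC _ g (mem_pow_wordLength hS g)

end Cocycle

section ConvPow

variable {G : Type*} [Group G] [MeasurableSpace G]

theorem convPow_succ (μ : Measure G) (n : ℕ) : convPow μ (n + 1) = convPow μ n ∗ₘ μ := rfl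

variable [MeasurableMul₂ G]

theorem map_inv_mconv [MeasurableInv G] (ρ ν : Measure G) [SFinite ρ] [SFinite ν] :
    (ρ ∗ₘ ν).map (fun g => g⁻¹) = ν.map (fun g => g⁻¹) ∗ₘ ρ.map (fun g => g⁻¹) := by
  unfold Measure.mconv
  rw [Measure.map_map measurable_inv measurable_mul,
    Measure.map_prod_map _ _ measurable_inv measurable_inv, ← Measure.prod_swap,
    Measure.map_map (measurable_inv.comp measurable_mul) measurable_swap,
    Measure.map_map measurable_mul (measurable_inv.prodMap measurable_inv)]
  congr 1
  ext p
  simp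

variable (μ : Measure G) [IsProbabilityMeasure μ]

instance (n : ℕ) : IsProbabilityMeasure (convPow μ n) := by
  induction n with
  | zero => rw [convPow]; infer_instance
  | succ n _ => rw [convPow_succ]; infer_instance

theorem mconv_convPow_comm (n : ℕ) : μ ∗ₘ convPow μ n = convPow μ n ∗ₘ μ := by
  induction n with
  | zero => rw [convPow, Measure.mconv_dirac_one, Measure.dirac_one_mconv]
  | succ n ih => rw [convPow_succ, ← Measure.mconv_assoc, ih]

theorem map_inv_convPow [MeasurableInv G] (hμ : μ.map (fun g => g⁻¹) = μ) (n : ℕ) :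
    (convPow μ n).map (fun g => g⁻¹) = convPow μ n := by
  induction n with
  | zero => simp [convPow, Measure.map_dirac' measurable_inv]
  | succ n ih => rw [convPow_succ, map_inv_mconv, ih, hμ, mconv_convPow_comm]

end ConvPow

section SelfAdjoint

variable {H : Type*} [NormedAddCommGroup H] [InnerProductSpace ℝ H] [CompleteSpace H]

theorem inner_sum_pow_apply_self_nonneg {P : H →L[ℝ] H} (hP : IsSelfAdjoint P) (hP1 : ‖P‖ ≤ 1)
    (v : H) (n : ℕ) : 0 ≤ ⟪∑ k ∈ Finset.range n, (P ^ k) v, v⟫ := by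
  have hsymm (k : ℕ) (x y : H) : ⟪(P ^ k) x, y⟫ = ⟪x, (P ^ k) y⟫ := (hP.pow k).isSymmetric x y
  have h_even (k : ℕ) : ⟪(P ^ (2 * k)) v, v⟫ = ‖(P ^ k) v‖ ^ 2 := by
    rw [two_mul, pow_add, mul_apply_eq_comp, hsymm, real_inner_self_eq_norm_sq]
  -- `⟪P^{2k} v, v⟫ + ⟪P^{2k+1} v, v⟫ = ⟪(1 + P) u, u⟫` with `u = P^k v`, and `1 + P ≥ 0`
  -- as `‖P‖ ≤ 1`.
  have h_pair (k : ℕ) : 0 ≤ ⟪(P ^ (2 * k)) v, v⟫ + ⟪(P ^ (2 * k + 1)) v, v⟫ := by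
    have h_odd : ⟪(P ^ (2 * k + 1)) v, v⟫ = ⟪P ((P ^ k) v), (P ^ k) v⟫ := by
      rw [show 2 * k + 1 = k + (1 + k) by ring, pow_add, pow_add, mul_apply_eq_comp, hsymm,
        mul_apply_eq_comp, pow_one]
    rw [h_even, h_odd]
    set u := (P ^ k) v
    have hPu : ‖P u‖ ≤ ‖u‖ := (P.le_opNorm u).trans (mul_le_of_le_one_left (norm_nonneg u) hP1)
    nlinarith [neg_abs_le ⟪P u, u⟫, abs_real_inner_le_norm (P u) u, norm_nonneg u]
  have h_pairs (m : ℕ) : 0 ≤ ∑ k ∈ Finset.range (2 * m), ⟪(P ^ k) v, v⟫ := by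
    induction m with
    | zero => simp
    | succ m ih =>
      rw [show 2 * (m + 1) = 2 * m + 1 + 1 by ring, Finset.sum_range_succ, Finset.sum_range_succ]
      linarith [h_pair m]
  rw [sum_inner]
  obtain ⟨m, rfl | rfl⟩ := Nat.even_or_odd' n
  · exact h_pairs m
  · rw [Finset.sum_range_succ, h_even]
    exact add_nonneg (h_pairs m) (sq_nonneg _)

end SelfAdjoint

section AveragingOperator

variable {G : Type*} [Group G] [TopologicalSpace G] [SecondCountableTopology G]
  [MeasurableSpace G] [OpensMeasurableSpace G]
  {H : Type*} [NormedAddCommGroup H] [InnerProductSpace ℝ H]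
  (π : G →* (H ≃ₗᵢ[ℝ] H)) (hπ : ∀ v : H, Continuous fun g => π g v)

include hπ in
theorem integrable_rep_apply (ν : Measure G) [IsFiniteMeasure ν] (v : H) :
    Integrable (fun g => π g v) ν :=
  (integrable_const ‖v‖).mono' (hπ v).aestronglyMeasurable
    (.of_forall fun g => ((π g).norm_map v).le)

def averagingOp (ν : Measure G) [IsProbabilityMeasure ν] : H →L[ℝ] H :=
  LinearMap.mkContinuous
    { toFun := fun v => ∫ g, π g v ∂ν
      map_add' := fun v w => by
        simp_rw [map_add]
        exact integral_add (integrable_rep_apply π hπ ν v) (integrable_rep_apply π hπ ν w)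
      map_smul' := fun c v => by
        simp_rw [map_smul]
        exact integral_smul c _ }
    1 fun v => by
      simpa [(π _).norm_map] using norm_integral_le_integral_norm (μ := ν) (fun g => π g v)

theorem averagingOp_apply (ν : Measure G) [IsProbabilityMeasure ν] (v : H) :
    averagingOp π hπ ν v = ∫ g, π g v ∂ν := rfl

theorem norm_averagingOp_le (ν : Measure G) [IsProbabilityMeasure ν] :
    ‖averagingOp π hπ ν‖ ≤ 1 :=
  LinearMap.mkContinuous_norm_le _ zero_le_one _

variable [CompleteSpace H]

theorem isSelfAdjoint_averagingOp [MeasurableInv G] (ν : Measure G) [IsProbabilityMeasure ν]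
    (hν : ν.map (fun g => g⁻¹) = ν) : IsSelfAdjoint (averagingOp π hπ ν) := by
  refine ContinuousLinearMap.isSelfAdjoint_iff_isSymmetric.mpr fun v w => ?_
  change ⟪∫ g, π g v ∂ν, w⟫ = ⟪v, ∫ g, π g w ∂ν⟫
  rw [real_inner_comm, ← integral_inner (integrable_rep_apply π hπ ν v),
    ← integral_inner (integrable_rep_apply π hπ ν w)]
  conv_rhs => rw [← hν, integral_map measurable_inv.aemeasurable
    (continuous_const.inner (hπ w)).aestronglyMeasurable]
  simp_rw [real_inner_comm _ v, inner_map_inv_apply]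

variable [MeasurableMul₂ G]

theorem averagingOp_mconv (ρ ν : Measure G) [IsProbabilityMeasure ρ] [IsProbabilityMeasure ν] :
    averagingOp π hπ (ρ ∗ₘ ν) = averagingOp π hπ ρ * averagingOp π hπ ν := by
  ext v
  rw [mul_apply_eq_comp, averagingOp_apply, averagingOp_apply,
    integral_mconv (integrable_rep_apply π hπ _ v)]
  refine integral_congr_ae (.of_forall fun x => ?_)
  simp only [map_mul, LinearIsometryEquiv.coe_mul, Function.comp_apply, averagingOp_apply]
  exact (π x).toLinearIsometry.integral_comp_comm _

theorem averagingOp_convPow (μ : Measure G) [IsProbabilityMeasure μ] (n : ℕ) :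
    averagingOp π hπ (convPow μ n) = averagingOp π hπ μ ^ n := by
  induction n with
  | zero =>
    ext v
    change ∫ g, π g v ∂(Measure.dirac 1) = v
    rw [integral_dirac' _ _ (hπ v).stronglyMeasurable, map_one]
    rfl
  | succ n ih => exact (averagingOp_mconv π hπ (convPow μ n) μ).trans (by rw [ih, pow_succ])

end AveragingOperator

theorem integrable_of_integrable_norm_sq {α E : Type*} [MeasurableSpace α] {μ : Measure α}
    [IsFiniteMeasure μ] [NormedAddCommGroup E] {f : α → E} (hf : AEStronglyMeasurable f μ)
    (h : Integrable (fun x => ‖f x‖ ^ 2) μ) : Integrable f μ :=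
  ((memLp_two_iff_integrable_sq_norm hf).2 h).integrable one_le_two

section CocycleIntegral

variable {G : Type*} [Group G] [TopologicalSpace G] [MeasurableSpace G] [OpensMeasurableSpace G]
  {H : Type*} [NormedAddCommGroup H] [InnerProductSpace ℝ H]
  {π : G →* (H ≃ₗᵢ[ℝ] H)} {b : G → H}
  (hb : ∀ g h : G, b (g * h) = b g + π g (b h)) (hbc : Continuous b)

include hb hbc

theorem integrable_norm_sq_cocycle_of_integrable_wordLength_sq (μ : Measure G) {S : Set G}
    (hS : ∀ g : G, ∃ n : ℕ, g ∈ S ^ n) {C : ℝ} (hC : ∀ s ∈ S, ‖b s‖ ≤ C)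
    (hμS : Integrable (fun g => (wordLength S g : ℝ) ^ 2) μ) :
    Integrable (fun g => ‖b g‖ ^ 2) μ := by
  refine (hμS.mul_const (C ^ 2)).mono' (hbc.norm.pow 2).aestronglyMeasurable
    (.of_forall fun g => ?_)
  rw [norm_pow, norm_norm, ← mul_pow]
  exact pow_le_pow_left₀ (norm_nonneg _) (norm_cocycle_le_mul_wordLength hb hS hC g) 2

variable [SecondCountableTopology G] [MeasurableMul₂ G]

theorem integrable_norm_sq_cocycle_mconv (ρ ν : Measure G) [IsProbabilityMeasure ρ]
    [IsProbabilityMeasure ν] (hρ : Integrable (fun g => ‖b g‖ ^ 2) ρ)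
    (hν : Integrable (fun g => ‖b g‖ ^ 2) ν) : Integrable (fun g => ‖b g‖ ^ 2) (ρ ∗ₘ ν) := by
  have h_le (g h : G) : ‖b (g * h)‖ ^ 2 ≤ 2 * (‖b g‖ ^ 2 + ‖b h‖ ^ 2) := by
    have h_tri : ‖b (g * h)‖ ≤ ‖b g‖ + ‖b h‖ := by
      rw [hb, ← (π g).norm_map (b h)]
      exact norm_add_le _ _
    nlinarith [sq_nonneg (‖b g‖ - ‖b h‖), norm_nonneg (b (g * h))]
  have hmeas : AEStronglyMeasurable (fun g => ‖b g‖ ^ 2) (ρ ∗ₘ ν) :=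
    (hbc.norm.pow 2).aestronglyMeasurable
  rw [Measure.mconv, integrable_map_measure hmeas measurable_mul.aemeasurable]
  refine ((hρ.comp_fst ν).add (hν.comp_snd ρ)).const_mul 2 |>.mono'
    (hmeas.comp_measurable measurable_mul) (.of_forall fun z => ?_)
  simpa [abs_of_nonneg] using h_le z.1 z.2

theorem integral_norm_sq_cocycle_mconv [CompleteSpace H] [MeasurableInv G] (ρ ν : Measure G)
    [IsProbabilityMeasure ρ] [IsProbabilityMeasure ν] (hρs : ρ.map (fun g => g⁻¹) = ρ)
    (hρ : Integrable (fun g => ‖b g‖ ^ 2) ρ) (hν : Integrable (fun g => ‖b g‖ ^ 2) ν) :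
    ∫ g, ‖b g‖ ^ 2 ∂(ρ ∗ₘ ν)
      = ∫ g, ‖b g‖ ^ 2 ∂ρ + ∫ g, ‖b g‖ ^ 2 ∂ν - 2 * ⟪∫ g, b g ∂ρ, ∫ g, b g ∂ν⟫ := by
  have hρb := integrable_of_integrable_norm_sq hbc.aestronglyMeasurable hρ
  have hνb := integrable_of_integrable_norm_sq hbc.aestronglyMeasurable hν
  -- the symmetry of `ρ` lets `g ↦ b g⁻¹` replace `b` on the `ρ` side
  have h_inv_meas : AEStronglyMeasurable b (ρ.map fun g => g⁻¹) := hbc.aestronglyMeasurable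
  have hρb_inv : Integrable (fun g => b g⁻¹) ρ := by
    rw [← hρs] at hρb
    exact (integrable_map_measure h_inv_meas measurable_inv.aemeasurable).1 hρb
  have h_integral_inv : ∫ g, b g⁻¹ ∂ρ = ∫ g, b g ∂ρ := by
    conv_rhs => rw [← hρs]
    rw [integral_map measurable_inv.aemeasurable h_inv_meas]
  have h_inner (x : G) : ∫ y, ‖b (x * y)‖ ^ 2 ∂ν
      = ‖b x‖ ^ 2 + ∫ y, ‖b y‖ ^ 2 ∂ν - 2 * ⟪b x⁻¹, ∫ y, b y ∂ν⟫ := by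
    have h_sq : Integrable (fun y => ‖b x‖ ^ 2 + ‖b y‖ ^ 2) ν := (integrable_const _).add hν
    have h_cross : Integrable (fun y => 2 * ⟪b x⁻¹, b y⟫) ν := (hνb.const_inner _).const_mul 2
    simp_rw [norm_sq_cocycle_mul hb x]
    rw [integral_sub h_sq h_cross, integral_add (integrable_const _) hν, integral_const_mul,
      integral_inner hνb]
    simp
  have h_sq : Integrable (fun x => ‖b x‖ ^ 2 + ∫ y, ‖b y‖ ^ 2 ∂ν) ρ := hρ.add (integrable_const _)
  have h_cross : Integrable (fun x => 2 * ⟪∫ y, b y ∂ν, b x⁻¹⟫) ρ :=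
    (hρb_inv.const_inner _).const_mul 2
  rw [integral_mconv (integrable_norm_sq_cocycle_mconv hb hbc ρ ν hρ hν)]
  simp_rw [h_inner, real_inner_comm (∫ y, b y ∂ν)]
  rw [integral_sub h_sq h_cross, integral_add hρ (integrable_const _), integral_const_mul,
    integral_inner hρb_inv, h_integral_inv]
  simp

omit hbc in
theorem integral_cocycle_mconv [CompleteSpace H] (hπ : ∀ v : H, Continuous fun g => π g v)
    (ρ ν : Measure G) [IsProbabilityMeasure ρ] [IsProbabilityMeasure ν] (hρ : Integrable b ρ)
    (hν : Integrable b ν) (hρν : Integrable b (ρ ∗ₘ ν)) :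
    ∫ g, b g ∂(ρ ∗ₘ ν) = ∫ g, b g ∂ρ + averagingOp π hπ ρ (∫ g, b g ∂ν) := by
  rw [integral_mconv hρν, averagingOp_apply, ← integral_add hρ (integrable_rep_apply π hπ ρ _)]
  refine integral_congr_ae (.of_forall fun x => ?_)
  have hπν : Integrable (fun y => π x (b y)) ν :=
    (π x).toLinearIsometry.toContinuousLinearMap.integrable_comp hν
  simp_rw [hb x]
  rw [integral_add (integrable_const _) hπν, integral_const, probReal_univ, one_smul]
  exact congrArg (b x + ·) ((π x).toLinearIsometry.integral_comp_comm b)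

variable (μ : Measure G) [IsProbabilityMeasure μ] (hμ : Integrable (fun g => ‖b g‖ ^ 2) μ)
include hμ

theorem integrable_norm_sq_cocycle_convPow (n : ℕ) :
    Integrable (fun g => ‖b g‖ ^ 2) (convPow μ n) := by
  induction n with
  | zero => exact integrable_dirac' (hbc.norm.pow 2).stronglyMeasurable enorm_lt_top
  | succ n ih => exact integrable_norm_sq_cocycle_mconv hb hbc _ μ ih hμ

variable [CompleteSpace H]

theorem integral_cocycle_convPow (hπ : ∀ v : H, Continuous fun g => π g v) (n : ℕ) :
    ∫ g, b g ∂(convPow μ n)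
      = ∑ k ∈ Finset.range n, (averagingOp π hπ μ ^ k) (∫ g, b g ∂μ) := by
  have h_int (m : ℕ) : Integrable b (convPow μ m) :=
    integrable_of_integrable_norm_sq hbc.aestronglyMeasurable
      (integrable_norm_sq_cocycle_convPow hb hbc μ hμ m)
  induction n with
  | zero =>
    change ∫ g, b g ∂(Measure.dirac 1) = 0
    rw [integral_dirac' _ _ hbc.stronglyMeasurable, cocycle_one hb]
  | succ n ih =>
    rw [Finset.sum_range_succ, ← ih, ← averagingOp_convPow]
    exact integral_cocycle_mconv hb hπ (convPow μ n) μ (h_int n)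
      (integrable_of_integrable_norm_sq hbc.aestronglyMeasurable hμ) (h_int (n + 1))

theorem integral_norm_sq_cocycle_convPow_le [MeasurableInv G]
    (hπ : ∀ v : H, Continuous fun g => π g v) (hμs : μ.map (fun g => g⁻¹) = μ) (n : ℕ) :
    ∫ g, ‖b g‖ ^ 2 ∂(convPow μ n) ≤ n * ∫ g, ‖b g‖ ^ 2 ∂μ := by
  induction n with
  | zero =>
    change ∫ g, ‖b g‖ ^ 2 ∂(Measure.dirac 1) ≤ _
    rw [integral_dirac' (fun g => ‖b g‖ ^ 2) _ (hbc.norm.pow 2).stronglyMeasurable, cocycle_one hb]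
    simp
  | succ n ih =>
    have h_cross : 0 ≤ ⟪∫ g, b g ∂(convPow μ n), ∫ g, b g ∂μ⟫ := by
      rw [integral_cocycle_convPow hb hbc μ hμ hπ n]
      exact inner_sum_pow_apply_self_nonneg (isSelfAdjoint_averagingOp π hπ μ hμs)
        (norm_averagingOp_le π hπ μ) _ n
    rw [convPow_succ, integral_norm_sq_cocycle_mconv hb hbc _ μ (map_inv_convPow μ hμs n)
      (integrable_norm_sq_cocycle_convPow hb hbc μ hμ n) hμ]
    push_cast
    linarith

theorem integral_wordLength_convPow_sublinear [MeasurableInv G]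
    (hπ : ∀ v : H, Continuous fun g => π g v) (hμs : μ.map (fun g => g⁻¹) = μ) {S : Set G}
    (hfast : ∀ M : ℝ, ∃ N : ℕ, ∀ n : ℕ, N ≤ n → ∀ g : G, wordLength S g = n →
      M * Real.sqrt n ≤ ‖b g‖)
    {δ : ℝ} (hδ : 0 < δ) :
    ∃ C : ℝ, ∀ n : ℕ, ∫ g, (wordLength S g : ℝ) ∂(convPow μ n) ≤ C + δ * n := by
  set ψ := ∫ g, ‖b g‖ ^ 2 ∂μ
  have hψ : 0 ≤ ψ := integral_nonneg fun g => sq_nonneg _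
  set M := √(ψ / δ) + 1
  have hM : 0 < M := by positivity
  have hψM : ψ / M ^ 2 ≤ δ := by
    rw [div_le_iff₀ (by positivity), ← div_le_iff₀' hδ]
    calc ψ / δ = √(ψ / δ) ^ 2 := (Real.sq_sqrt (by positivity)).symm
      _ ≤ M ^ 2 := by gcongr; linarith
  obtain ⟨N, hN⟩ := hfast M
  refine ⟨N, fun n => ?_⟩
  have h_int := (integrable_norm_sq_cocycle_convPow hb hbc μ hμ n).div_const (M ^ 2)
  calc ∫ g, (wordLength S g : ℝ) ∂(convPow μ n)
      ≤ ∫ g, ((N : ℝ) + ‖b g‖ ^ 2 / M ^ 2) ∂(convPow μ n) :=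
        integral_mono_of_nonneg (.of_forall fun g => Nat.cast_nonneg _)
          ((integrable_const _).add h_int)
          (.of_forall fun g => le_add_sq_div_sq_of_mul_sqrt_le hM fun h => hN _ h g rfl)
    _ = N + (∫ g, ‖b g‖ ^ 2 ∂(convPow μ n)) / M ^ 2 := by
        rw [integral_add (integrable_const _) h_int, integral_const, integral_div]
        simp
    _ ≤ N + n * ψ / M ^ 2 := by
        gcongr
        exact integral_norm_sq_cocycle_convPow_le hb hbc μ hμ hπ hμs n
    _ ≤ N + δ * n := by
        rw [mul_div_assoc, mul_comm δ]
        gcongr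

end CocycleIntegral

theorem drift_eq_zero_of_compression_gt_sqrt_general
    {G : Type*} [Group G] [TopologicalSpace G] [IsTopologicalGroup G]
    [LocallyCompactSpace G] [SecondCountableTopology G]
    [MeasurableSpace G] [BorelSpace G]
    (S : Set G) (hScpt : IsCompact S)
    (hSgen : ∀ g : G, ∃ n : ℕ, g ∈ S ^ n)
    (hfast : Nonempty (SuperSqrtCocycle G S)) :
    ∀ μ : MeasureTheory.Measure G, CohomologicallyAdapted S μ →
      (∃ K : Set G, IsCompact K ∧ μ Kᶜ = 0) →
      sInf {x : ℝ | ∃ n : ℕ, 1 ≤ n ∧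
        x = (1 / (n : ℝ)) * ∫ g, (wordLength S g : ℝ) ∂(convPow μ n)} = 0 := by
  intro μ hμ _
  have := hμ.isProb
  obtain ⟨c⟩ := hfast
  let := c.ng
  let := c.ip
  let := c.cs
  obtain ⟨C, hC⟩ : ∃ C, ∀ s ∈ S, ‖c.b s‖ ≤ C :=
    (hScpt.image (continuous_norm.comp c.bCont)).bddAbove.imp
      fun C hC s hs => hC (Set.mem_image_of_mem _ hs)
  have hμS : Integrable (fun g => (wordLength S g : ℝ) ^ 2) μ := by
    simpa using hμ.finiteMoments 2 one_le_two
  have hμb :=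
    integrable_norm_sq_cocycle_of_integrable_wordLength_sq c.cocycle c.bCont μ hSgen hC hμS
  exact sInf_inv_mul_eq_zero_of_sublinear _ (fun n => integral_nonneg fun g => Nat.cast_nonneg _)
    fun δ hδ => integral_wordLength_convPow_sublinear c.cocycle c.bCont μ hμb c.strongCont
      hμ.symmetric c.fast hδ

theorem drift_eq_zero_of_compression_gt_sqrt
    {G : Type*} [Group G] [TopologicalSpace G] [IsTopologicalGroup G]
    [LocallyCompactSpace G] [SecondCountableTopology G]
    [MeasurableSpace G] [BorelSpace G]
    (S : Set G) (hScpt : IsCompact S) (hSsymm : S⁻¹ = S)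
    (hSgen : ∀ g : G, ∃ n : ℕ, g ∈ S ^ n)
    (hUni : (MeasureTheory.Measure.haar : MeasureTheory.Measure G).IsMulRightInvariant)
    (hfast : Nonempty (SuperSqrtCocycle G S)) :
    ∀ μ : MeasureTheory.Measure G, CohomologicallyAdapted S μ →
      (∃ K : Set G, IsCompact K ∧ μ Kᶜ = 0) →
      sInf {x : ℝ | ∃ n : ℕ, 1 ≤ n ∧
        x = (1 / (n : ℝ)) * ∫ g, (wordLength S g : ℝ) ∂(convPow μ n)} = 0 :=
  drift_eq_zero_of_compression_gt_sqrt_general S hScpt hSgen hfast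
end
end

section
/- Let G be a locally compact second countable, compactly generated group with compact symmetric generating set S, and let μ be a cohomologically adapted probability measure on G. Let 2 ≤ p < ∞, c > 0 and d > 0, and let E be a real Banach space satisfying both the (p,c)-uniform convexity inequality and the (2,d)-uniform smoothness inequality with a common duality map J. Let π : G → O(E) be a strongly continuous isometric linear representation and b ∈ Z¹(G, π) a 1-cocycle. Assume there is a μ-harmonic 1-cocycle b_h ∈ Z¹(G, π) with ∫_G ‖b_h(g)‖^p dμ(g) > 0 such that b − b_h is bounded, i.e. sup_{g ∈ G} ‖b(g) − b_h(g)‖ < ∞. Then there exists C > 0 such that for all n ≥ 1: (∫_G ‖b(g)‖^p dμ^{*n}(g))^{1/p} ≥ C⁻¹ · n^{1/p} and (∫_G ‖b(g)‖² dμ^{*n}(g))^{1/2} ≤ C · n^{1/2}. -/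
/-!
Harmonicity kills the linear term when the `(p,c)`-convexity and `(2,d)`-smoothness
inequalities are applied to `b_h(gh) = b_h(g) + π(g) b_h(h)` and integrated in `h` against `μ`.
As `μ^{*(n+1)}` is the image of `μ^{*n} ⊗ μ` under multiplication, this gives
`∫‖b_h‖^p dμ^{*(n+1)} ≥ ∫‖b_h‖^p dμ^{*n} + c ∫‖b_h‖^p dμ` and
`∫‖b_h‖² dμ^{*(n+1)} ≤ ∫‖b_h‖² dμ^{*n} + d ∫‖b_h‖² dμ`, so both energies of `b_h` grow
linearly, and the bounded perturbation `b - b_h` changes them by bounded amounts only. That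
settles large `n`; for each small `n` it remains to see `∫‖b‖^p dμ^{*n} > 0`. This holds because
`μ^{*n}` charges every open set meeting `Sⁿ`, while a cocycle vanishing on `Sⁿ` is bounded and
`b` is not.
-/

open Pointwise
open scoped ENNReal

noncomputable section

open Classical in
/-- `x^{*_p} = ‖x‖^{p−2}·Jx` for `x ≠ 0`, and `0^{*_p} = 0`. -/
def starMap {E : Type*} [NormedAddCommGroup E] [NormedSpace ℝ E]
    (J : E → StrongDual ℝ E) (p : ℝ) (x : E) : StrongDual ℝ E :=
  if x = 0 then 0 else ‖x‖ ^ (p - 2) • J x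

/-- `E` satisfies the `(p,c)`-uniform convexity inequality with duality map `J`:
`J` is continuous, `⟨x, Jx⟩ = ‖x‖²`, `‖Jx‖ = ‖x‖` and
`‖x+y‖^p ≥ ‖x‖^p + p⟨y, x^{*_p}⟩ + c‖y‖^p`. -/
structure IsConvexDualityMap {E : Type*} [NormedAddCommGroup E] [NormedSpace ℝ E]
    (p c : ℝ) (J : E → StrongDual ℝ E) : Prop where
  continuous : Continuous J
  pairing : ∀ x : E, J x x = ‖x‖ ^ 2
  norm_eq : ∀ x : E, ‖J x‖ = ‖x‖
  ineq : ∀ x y : E, ‖x‖ ^ p + p * starMap J p x y + c * ‖y‖ ^ p ≤ ‖x + y‖ ^ p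

open MeasureTheory Filter

lemma norm_add_rpow_le {E : Type*} [SeminormedAddCommGroup E] (x y : E) {p : ℝ} (hp : 1 ≤ p) :
    ‖x + y‖ ^ p ≤ 2 ^ (p - 1) * (‖x‖ ^ p + ‖y‖ ^ p) :=
  calc ‖x + y‖ ^ p ≤ (‖x‖ + ‖y‖) ^ p :=
        Real.rpow_le_rpow (norm_nonneg _) (norm_add_le x y) (by linarith)
    _ ≤ 2 ^ (p - 1) * (‖x‖ ^ p + ‖y‖ ^ p) := by
        exact_mod_cast NNReal.rpow_add_le_mul_rpow_add_rpow ‖x‖₊ ‖y‖₊ hp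

def IsCocycle {G E : Type*} [Monoid G] [NormedAddCommGroup E] [NormedSpace ℝ E]
    (π : G →* (E ≃ₗᵢ[ℝ] E)) (b : G → E) : Prop :=
  ∀ g h : G, b (g * h) = b g + π g (b h)

namespace IsCocycle

variable {G E : Type*} [Monoid G] [NormedAddCommGroup E] [NormedSpace ℝ E]
  {π : G →* (E ≃ₗᵢ[ℝ] E)} {b : G → E}

lemma map_one_eq_zero (hb : IsCocycle π b) : b 1 = 0 := by
  simpa [map_one] using hb 1 1

lemma norm_mul_le (hb : IsCocycle π b) (g h : G) : ‖b (g * h)‖ ≤ ‖b g‖ + ‖b h‖ := by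
  simpa [hb g h] using norm_add_le (b g) (π g (b h))

lemma norm_mul_rpow_le (hb : IsCocycle π b) {p : ℝ} (hp : 1 ≤ p) (g h : G) :
    ‖b (g * h)‖ ^ p ≤ 2 ^ (p - 1) * (‖b g‖ ^ p + ‖b h‖ ^ p) := by
  simpa [hb g h] using norm_add_rpow_le (b g) (π g (b h)) hp

lemma norm_mul_sq_le (hb : IsCocycle π b) (g h : G) :
    ‖b (g * h)‖ ^ 2 ≤ 2 * (‖b g‖ ^ 2 + ‖b h‖ ^ 2) :=
  (pow_le_pow_left₀ (norm_nonneg _) (hb.norm_mul_le g h) 2).trans add_sq_le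

lemma norm_le_mul_of_mem_pow (hb : IsCocycle π b) {S : Set G} {K : ℝ}
    (hK : ∀ s ∈ S, ‖b s‖ ≤ K) : ∀ {m : ℕ} {g : G}, g ∈ S ^ m → ‖b g‖ ≤ K * m
  | 0, g, hg => by simp_all [hb.map_one_eq_zero]
  | m + 1, _, hg => by
    obtain ⟨x, hx, y, hy, rfl⟩ := Set.mem_mul.1 (pow_succ S m ▸ hg)
    have := hb.norm_le_mul_of_mem_pow hK hx
    push_cast
    linarith [hb.norm_mul_le x y, hK y hy]

lemma eq_zero_of_mem_pow (hb : IsCocycle π b) {A : Set G} (hA : ∀ g ∈ A, b g = 0) :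
    ∀ {k : ℕ} {g : G}, g ∈ A ^ k → b g = 0
  | 0, g, hg => by simp_all [hb.map_one_eq_zero]
  | k + 1, _, hg => by
    obtain ⟨x, hx, y, hy, rfl⟩ := Set.mem_mul.1 (pow_succ A k ▸ hg)
    rw [hb, hb.eq_zero_of_mem_pow hA hx, hA y hy, map_zero, add_zero]

/-- Write `Sᵐ = (Sⁿ)^q · S^r` with `r < n`; for `z ∈ (Sⁿ)^q` we have `b (z h) = π z (b h)`. -/
lemma norm_le_of_forall_mem_pow_eq_zero (hb : IsCocycle π b) {S : Set G} {K : ℝ}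
    (hK : ∀ s ∈ S, ‖b s‖ ≤ K) (hK0 : 0 ≤ K) {n : ℕ} (hn : 0 < n)
    (hzero : ∀ g ∈ S ^ n, b g = 0) {m : ℕ} {g : G} (hg : g ∈ S ^ m) : ‖b g‖ ≤ K * n := by
  rw [← Nat.div_add_mod m n, pow_add, pow_mul] at hg
  obtain ⟨z, hz, h, hh, rfl⟩ := Set.mem_mul.1 hg
  rw [hb, hb.eq_zero_of_mem_pow hzero hz, zero_add, LinearIsometryEquiv.norm_map]
  calc ‖b h‖ ≤ K * (m % n : ℕ) := hb.norm_le_mul_of_mem_pow hK hh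
    _ ≤ K * n := by gcongr; exact (Nat.mod_lt m hn).le

lemma exists_mem_pow_ne_zero [TopologicalSpace G] (hb : IsCocycle π b) (hbc : Continuous b)
    {S : Set G} (hS : IsCompact S) (hSgen : ∀ g : G, ∃ n : ℕ, g ∈ S ^ n)
    (hunb : ∀ R : ℝ, ∃ g, R < ‖b g‖) {n : ℕ} (hn : 0 < n) : ∃ g ∈ S ^ n, b g ≠ 0 := by
  by_contra! hzero
  obtain ⟨K, hK⟩ := hS.exists_bound_of_continuousOn hbc.continuousOn
  obtain ⟨g, hg⟩ := hunb (max K 0 * n)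
  exact hg.not_ge (hb.norm_le_of_forall_mem_pow_eq_zero
    (fun s hs => (hK s hs).trans (le_max_left _ _)) (le_max_right _ _) hn hzero
    (hSgen g).choose_spec)

end IsCocycle

section ConvPow

variable {G : Type*} [Monoid G] [MeasurableSpace G] {μ : Measure G}

lemma convPow_succ_s19 (μ : Measure G) (n : ℕ) :
    convPow μ (n + 1) = ((convPow μ n).prod μ).map (fun q : G × G => q.1 * q.2) := rfl

variable [MeasurableMul₂ G]

instance isProbabilityMeasure_convPow [IsProbabilityMeasure μ] (n : ℕ) :
    IsProbabilityMeasure (convPow μ n) := by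
  induction n with
  | zero => exact inferInstanceAs (IsProbabilityMeasure (Measure.dirac 1))
  | succ n ih => exact Measure.isProbabilityMeasure_map measurable_mul.aemeasurable

lemma integrable_convPow [IsProbabilityMeasure μ] {φ : G → ℝ} (hφ : StronglyMeasurable φ)
    (hφ0 : 0 ≤ φ) {A : ℝ} (hsub : ∀ g h, φ (g * h) ≤ A * (φ g + φ h)) (hint : Integrable φ μ) :
    ∀ n, Integrable φ (convPow μ n)
  | 0 => integrable_dirac' hφ enorm_lt_top
  | n + 1 => by
    refine (integrable_map_measure hφ.aestronglyMeasurable measurable_mul.aemeasurable).2 ?_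
    refine Integrable.mono' ((((integrable_convPow hφ hφ0 hsub hint n).comp_fst μ).add
      (hint.comp_snd _)).const_mul A) (hφ.comp_measurable measurable_mul).aestronglyMeasurable
      (Eventually.of_forall fun q => ?_)
    simpa [Real.norm_of_nonneg (hφ0 _)] using hsub q.1 q.2

lemma le_integral_convPow [IsProbabilityMeasure μ] {φ : G → ℝ} (hφ : StronglyMeasurable φ)
    (hint : ∀ n, Integrable φ (convPow μ n)) {a : ℝ}
    (hstep : ∀ g, φ g + a ≤ ∫ h, φ (g * h) ∂μ) :
    ∀ n : ℕ, φ 1 + n * a ≤ ∫ g, φ g ∂convPow μ n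
  | 0 => by simp [convPow, integral_dirac' φ 1 hφ]
  | n + 1 => by
    have hprod : Integrable (fun q : G × G => φ (q.1 * q.2)) ((convPow μ n).prod μ) :=
      (integrable_map_measure hφ.aestronglyMeasurable measurable_mul.aemeasurable).1 (hint (n + 1))
    calc φ 1 + (n + 1 : ℕ) * a = (φ 1 + n * a) + a := by push_cast; ring
      _ ≤ (∫ g, φ g ∂convPow μ n) + a := by gcongr; exact le_integral_convPow hφ hint hstep n
      _ = ∫ g, (φ g + a) ∂convPow μ n := by simp [integral_add (hint n) (integrable_const a)]
      _ ≤ ∫ g, ∫ h, φ (g * h) ∂μ ∂convPow μ n :=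
        integral_mono ((hint n).add (integrable_const a)) hprod.integral_prod_left hstep
      _ = ∫ g, φ g ∂convPow μ (n + 1) := by
        rw [convPow_succ_s19, integral_map measurable_mul.aemeasurable hφ.aestronglyMeasurable,
          integral_prod _ hprod]

lemma integral_convPow_le [IsProbabilityMeasure μ] {φ : G → ℝ} (hφ : StronglyMeasurable φ)
    (hint : ∀ n, Integrable φ (convPow μ n)) {a : ℝ}
    (hstep : ∀ g, ∫ h, φ (g * h) ∂μ ≤ φ g + a) (n : ℕ) :
    ∫ g, φ g ∂convPow μ n ≤ φ 1 + n * a := by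
  have := le_integral_convPow hφ.neg (fun n => (hint n).neg) (a := -a)
    (fun g => by simp only [Pi.neg_apply, integral_neg]; linarith [hstep g]) n
  simp only [Pi.neg_apply, integral_neg] at this
  linarith

lemma convPow_pos_of_isOpen [IsProbabilityMeasure μ] [TopologicalSpace G] [ContinuousMul G]
    [OpensMeasurableSpace G] {S : Set G} (hμ : ∀ s ∈ S, ∀ U : Set G, IsOpen U → s ∈ U → 0 < μ U) :
    ∀ (n : ℕ) {U : Set G}, IsOpen U → (U ∩ S ^ n).Nonempty → 0 < convPow μ n U
  | 0, U, _, ⟨x, hxU, hx⟩ => by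
    rw [pow_zero, Set.mem_one] at hx
    simp [convPow, Measure.dirac_apply_of_mem (hx ▸ hxU)]
  | n + 1, U, hU, ⟨x, hxU, hx⟩ => by
    obtain ⟨y, hy, z, hz, rfl⟩ := Set.mem_mul.1 (pow_succ S n ▸ hx)
    obtain ⟨V, W, hV, hW, hyV, hzW, hVW⟩ :=
      isOpen_prod_iff.1 (hU.preimage continuous_mul) y z hxU
    rw [convPow_succ_s19, Measure.map_apply measurable_mul hU.measurableSet]
    calc 0 < convPow μ n V * μ W :=
          ENNReal.mul_pos (convPow_pos_of_isOpen hμ n hV ⟨y, hyV, hy⟩).ne'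
            (hμ z hz W hW hzW).ne'
      _ = (convPow μ n).prod μ (V ×ˢ W) := (Measure.prod_prod V W).symm
      _ ≤ _ := measure_mono hVW

lemma integral_norm_rpow_convPow_pos [IsProbabilityMeasure μ] [TopologicalSpace G]
    [ContinuousMul G] [OpensMeasurableSpace G] {F : Type*} [NormedAddCommGroup F] {S : Set G}
    (hμ : ∀ s ∈ S, ∀ U : Set G, IsOpen U → s ∈ U → 0 < μ U) {f : G → F} (hf : Continuous f)
    {q : ℝ} (hq : 0 ≤ q) {n : ℕ} (hint : Integrable (fun x => ‖f x‖ ^ q) (convPow μ n))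
    {g : G} (hgS : g ∈ S ^ n) (hg : f g ≠ 0) : 0 < ∫ x, ‖f x‖ ^ q ∂convPow μ n :=
  (integral_pos_iff_support_of_nonneg (fun _ => by positivity) hint).2
    (convPow_pos_of_isOpen hμ n (hf.norm.rpow_const fun _ => Or.inr hq).isOpen_support
      ⟨g, (Real.rpow_pos_of_pos (norm_pos_iff.2 hg) q).ne', hgS⟩)

end ConvPow

lemma integrable_comp_mul_left {G : Type*} [Monoid G] [MeasurableSpace G] [MeasurableMul G]
    {μ : Measure G} [IsFiniteMeasure μ] {φ : G → ℝ} (hφ : StronglyMeasurable φ) (hφ0 : 0 ≤ φ)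
    {A : ℝ} (hsub : ∀ g h, φ (g * h) ≤ A * (φ g + φ h)) (hint : Integrable φ μ) (g : G) :
    Integrable (fun h => φ (g * h)) μ :=
  Integrable.mono' (((integrable_const (φ g)).add hint).const_mul A)
    (hφ.comp_measurable (measurable_const_mul g)).aestronglyMeasurable
    (Eventually.of_forall fun h => by simpa [Real.norm_of_nonneg (hφ0 _)] using hsub g h)

lemma integral_dual_apply_eq_zero {G E : Type*} [Monoid G] [MeasurableSpace G]
    [NormedAddCommGroup E] [NormedSpace ℝ E] [CompleteSpace E] {μ : Measure G}
    {b : G → E} (hint : Integrable b μ) (hharm : ∫ g, b g ∂μ = 0)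
    (π : G →* (E ≃ₗᵢ[ℝ] E)) (L : StrongDual ℝ E) (g : G) :
    ∫ h, L (π g (b h)) ∂μ = 0 := by
  simpa [hharm] using
    (L.comp (π g).toContinuousLinearEquiv.toContinuousLinearMap).integral_comp_comm hint

namespace IsCocycle

variable {G E : Type*} [Monoid G] [TopologicalSpace G] [MeasurableSpace G]
  [OpensMeasurableSpace G] [NormedAddCommGroup E] [NormedSpace ℝ E]
  {π : G →* (E ≃ₗᵢ[ℝ] E)} {b : G → E} {μ : Measure G}

lemma integrable_norm_rpow (hb : IsCocycle π b) (hbc : Continuous b) {S : Set G}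
    (hS : IsCompact S) (hSgen : ∀ g : G, ∃ n : ℕ, g ∈ S ^ n) {q : ℝ} (hq : 0 ≤ q)
    (hmom : Integrable (fun g => (wordLength S g : ℝ) ^ q) μ) :
    Integrable (fun g => ‖b g‖ ^ q) μ := by
  obtain ⟨K, hK⟩ := hS.exists_bound_of_continuousOn hbc.continuousOn
  have hK0 : 0 ≤ max K 0 := le_max_right _ _
  refine Integrable.mono' (hmom.const_mul (max K 0 ^ q))
    (hbc.norm.rpow_const fun _ => Or.inr hq).aestronglyMeasurable
    (Eventually.of_forall fun g => ?_)
  rw [Real.norm_of_nonneg (by positivity), ← Real.mul_rpow hK0 (Nat.cast_nonneg _)]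
  exact Real.rpow_le_rpow (norm_nonneg _) (hb.norm_le_mul_of_mem_pow
    (fun s hs => (hK s hs).trans (le_max_left _ _)) (Nat.sInf_mem (hSgen g))) hq

variable [MeasurableMul₂ G] [IsProbabilityMeasure μ]

lemma integrable_norm_rpow_convPow (hb : IsCocycle π b) (hbc : Continuous b) {p : ℝ}
    (hp : 1 ≤ p) (hintp : Integrable (fun g => ‖b g‖ ^ p) μ) (n : ℕ) :
    Integrable (fun g => ‖b g‖ ^ p) (convPow μ n) :=
  integrable_convPow (hbc.norm.rpow_const fun _ => Or.inr (by linarith)).stronglyMeasurable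
    (fun _ => by positivity) (hb.norm_mul_rpow_le hp) hintp n

variable [CompleteSpace E]

/-- Integrate the convexity inequality at `(b g, π g (b h))` over `h`: by harmonicity the
linear term drops out. -/
lemma norm_rpow_add_le_integral {J : E → StrongDual ℝ E} {p c : ℝ}
    (hJ : IsConvexDualityMap p c J) (hp : 1 ≤ p) (hb : IsCocycle π b) (hbc : Continuous b)
    (hint : Integrable b μ) (hharm : ∫ g, b g ∂μ = 0)
    (hintp : Integrable (fun g => ‖b g‖ ^ p) μ) (g : G) :
    ‖b g‖ ^ p + c * ∫ h, ‖b h‖ ^ p ∂μ ≤ ∫ h, ‖b (g * h)‖ ^ p ∂μ := by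
  set L := starMap J p (b g)
  have hpt : ∀ h, ‖b g‖ ^ p + p * L (π g (b h)) + c * ‖b h‖ ^ p ≤ ‖b (g * h)‖ ^ p :=
    fun h => by simpa [hb g h] using hJ.ineq (b g) (π g (b h))
  have hL : Integrable (fun h => L (π g (b h))) μ :=
    (L.comp (π g).toContinuousLinearEquiv.toContinuousLinearMap).integrable_comp hint
  have hlin : Integrable (fun h => ‖b g‖ ^ p + p * L (π g (b h))) μ :=
    (integrable_const _).add (hL.const_mul p)
  calc ‖b g‖ ^ p + c * ∫ h, ‖b h‖ ^ p ∂μ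
      = ∫ h, (‖b g‖ ^ p + p * L (π g (b h)) + c * ‖b h‖ ^ p) ∂μ := by
        rw [integral_add hlin (hintp.const_mul c), integral_add (integrable_const _)
          (hL.const_mul p), integral_const_mul, integral_const_mul,
          integral_dual_apply_eq_zero hint hharm]
        simp
    _ ≤ ∫ h, ‖b (g * h)‖ ^ p ∂μ :=
        integral_mono (hlin.add (hintp.const_mul c)) (integrable_comp_mul_left
          (hbc.norm.rpow_const fun _ => Or.inr (by linarith)).stronglyMeasurable
          (fun _ => by positivity) (hb.norm_mul_rpow_le hp) hintp g) hpt

lemma integral_norm_sq_mul_le {J : E → StrongDual ℝ E} {d : ℝ}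
    (hJ : ∀ x y : E, ‖x + y‖ ^ 2 ≤ ‖x‖ ^ 2 + 2 * J x y + d * ‖y‖ ^ 2) (hb : IsCocycle π b)
    (hbc : Continuous b) (hint : Integrable b μ) (hharm : ∫ g, b g ∂μ = 0)
    (hint2 : Integrable (fun g => ‖b g‖ ^ 2) μ) (g : G) :
    ∫ h, ‖b (g * h)‖ ^ 2 ∂μ ≤ ‖b g‖ ^ 2 + d * ∫ h, ‖b h‖ ^ 2 ∂μ := by
  set L := J (b g)
  have hpt : ∀ h, ‖b (g * h)‖ ^ 2 ≤ ‖b g‖ ^ 2 + 2 * L (π g (b h)) + d * ‖b h‖ ^ 2 :=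
    fun h => by simpa [hb g h] using hJ (b g) (π g (b h))
  have hL : Integrable (fun h => L (π g (b h))) μ :=
    (L.comp (π g).toContinuousLinearEquiv.toContinuousLinearMap).integrable_comp hint
  have hlin : Integrable (fun h => ‖b g‖ ^ 2 + 2 * L (π g (b h))) μ :=
    (integrable_const _).add (hL.const_mul 2)
  calc ∫ h, ‖b (g * h)‖ ^ 2 ∂μ
      ≤ ∫ h, (‖b g‖ ^ 2 + 2 * L (π g (b h)) + d * ‖b h‖ ^ 2) ∂μ :=
        integral_mono (integrable_comp_mul_left (hbc.norm.pow 2).stronglyMeasurable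
          (fun _ => sq_nonneg _) hb.norm_mul_sq_le hint2 g) (hlin.add (hint2.const_mul d))
          hpt
    _ = ‖b g‖ ^ 2 + d * ∫ h, ‖b h‖ ^ 2 ∂μ := by
        rw [integral_add hlin (hint2.const_mul d), integral_add (integrable_const _)
          (hL.const_mul 2), integral_const_mul, integral_const_mul,
          integral_dual_apply_eq_zero hint hharm]
        simp

lemma le_integral_norm_rpow_convPow {J : E → StrongDual ℝ E} {p c : ℝ}
    (hJ : IsConvexDualityMap p c J) (hp : 1 ≤ p) (hb : IsCocycle π b) (hbc : Continuous b)
    (hint : Integrable b μ) (hharm : ∫ g, b g ∂μ = 0)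
    (hintp : Integrable (fun g => ‖b g‖ ^ p) μ) (n : ℕ) :
    n * (c * ∫ g, ‖b g‖ ^ p ∂μ) ≤ ∫ g, ‖b g‖ ^ p ∂convPow μ n := by
  simpa [hb.map_one_eq_zero, Real.zero_rpow (by linarith : p ≠ 0)] using le_integral_convPow
    (hbc.norm.rpow_const fun _ => Or.inr (by linarith)).stronglyMeasurable
    (hb.integrable_norm_rpow_convPow hbc hp hintp)
    (hb.norm_rpow_add_le_integral hJ hp hbc hint hharm hintp) n

lemma integral_norm_sq_convPow_le {J : E → StrongDual ℝ E} {d : ℝ}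
    (hJ : ∀ x y : E, ‖x + y‖ ^ 2 ≤ ‖x‖ ^ 2 + 2 * J x y + d * ‖y‖ ^ 2) (hb : IsCocycle π b)
    (hbc : Continuous b) (hint : Integrable b μ) (hharm : ∫ g, b g ∂μ = 0)
    (hint2 : Integrable (fun g => ‖b g‖ ^ 2) μ) (n : ℕ) :
    ∫ g, ‖b g‖ ^ 2 ∂convPow μ n ≤ n * (d * ∫ g, ‖b g‖ ^ 2 ∂μ) := by
  have hφ := (hbc.norm.pow 2).stronglyMeasurable
  simpa [hb.map_one_eq_zero] using integral_convPow_le hφ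
    (integrable_convPow hφ (fun _ => sq_nonneg _) hb.norm_mul_sq_le hint2)
    (hb.integral_norm_sq_mul_le hJ hbc hint hharm hint2) n

end IsCocycle

section Comparison

variable {α F : Type*} [MeasurableSpace α] [NormedAddCommGroup F]

lemma integral_norm_rpow_le_of_norm_sub_le {ν : Measure α} [IsProbabilityMeasure ν]
    {f f' : α → F} {q M : ℝ} (hq : 1 ≤ q) (hf' : AEStronglyMeasurable f' ν)
    (hf : Integrable (fun x => ‖f x‖ ^ q) ν) (hM : ∀ x, ‖f' x - f x‖ ≤ M) :
    Integrable (fun x => ‖f' x‖ ^ q) ν ∧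
      ∫ x, ‖f' x‖ ^ q ∂ν ≤ 2 ^ (q - 1) * (∫ x, ‖f x‖ ^ q ∂ν + M ^ q) := by
  have hpt : ∀ x, ‖f' x‖ ^ q ≤ 2 ^ (q - 1) * (‖f x‖ ^ q + M ^ q) := fun x =>
    calc ‖f' x‖ ^ q = ‖f x + (f' x - f x)‖ ^ q := by rw [add_sub_cancel]
      _ ≤ 2 ^ (q - 1) * (‖f x‖ ^ q + ‖f' x - f x‖ ^ q) := norm_add_rpow_le _ _ hq
      _ ≤ 2 ^ (q - 1) * (‖f x‖ ^ q + M ^ q) := by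
        gcongr
        exact hM x
  have hdom : Integrable (fun x => 2 ^ (q - 1) * (‖f x‖ ^ q + M ^ q)) ν :=
    (hf.add (integrable_const _)).const_mul _
  have hint : Integrable (fun x => ‖f' x‖ ^ q) ν :=
    hdom.mono' (hf'.norm.aemeasurable.pow_const q).aestronglyMeasurable
      (Eventually.of_forall fun x => by rw [Real.norm_of_nonneg (by positivity)]; exact hpt x)
  refine ⟨hint, (integral_mono hint hdom hpt).trans_eq ?_⟩
  rw [integral_const_mul, integral_add hf (integrable_const _)]
  simp

lemma integral_norm_rpow_le_of_norm_le {ν : Measure α} [IsProbabilityMeasure ν] {f : α → F}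
    {q R : ℝ} (hq : 0 ≤ q) (hR : ∀ x, ‖f x‖ ≤ R) : ∫ x, ‖f x‖ ^ q ∂ν ≤ R ^ q := by
  have := norm_integral_le_of_norm_le_const (μ := ν) (f := fun x => ‖f x‖ ^ q)
    (Eventually.of_forall fun x => by
      rw [Real.norm_of_nonneg (by positivity)]
      exact Real.rpow_le_rpow (norm_nonneg _) (hR x) hq)
  simpa using (le_abs_self _).trans this

lemma exists_lt_norm_of_mul_le_integral {ν : ℕ → Measure α} [∀ n, IsProbabilityMeasure (ν n)]
    {f : α → F} {q a B : ℝ} (hq : 0 ≤ q) (ha : 0 < a)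
    (hlin : ∀ n : ℕ, a * n ≤ ∫ x, ‖f x‖ ^ q ∂ν n + B) (R : ℝ) : ∃ x, R < ‖f x‖ := by
  by_contra! hR
  obtain ⟨m, hm⟩ := exists_nat_gt ((R ^ q + B) / a)
  linarith [(div_lt_iff₀ ha).1 hm, hlin m, integral_norm_rpow_le_of_norm_le (ν := ν m) hq hR]

end Comparison

lemma exists_pos_mul_le_of_eventually_mul_le {x : ℕ → ℝ} (hpos : ∀ n, 1 ≤ n → 0 < x n)
    {a : ℝ} (ha : 0 < a) (hev : ∀ᶠ n in atTop, a * n ≤ x n) :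
    ∃ C, 0 < C ∧ ∀ n, 1 ≤ n → C * n ≤ x n := by
  obtain ⟨N, hN⟩ := eventually_atTop.1 hev
  clear hev
  induction N generalizing a with
  | zero => exact ⟨a, ha, fun n _ => hN n n.zero_le⟩
  | succ N ih =>
    rcases Nat.eq_zero_or_pos N with rfl | hN0
    · exact ⟨a, ha, hN⟩
    have hNpos : (0 : ℝ) < N := by exact_mod_cast hN0
    refine ih (lt_min ha (div_pos (hpos N hN0) hNpos)) fun n hn => ?_
    rcases hn.eq_or_lt with rfl | hlt
    · calc min a (x N / N) * N ≤ x N / N * N := by gcongr; exact min_le_right _ _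
        _ = x N := div_mul_cancel₀ _ hNpos.ne'
    · exact (mul_le_mul_of_nonneg_right (min_le_left _ _) n.cast_nonneg).trans (hN n hlt)

lemma exists_pos_mul_le_of_mul_le_add {x : ℕ → ℝ} (hpos : ∀ n, 1 ≤ n → 0 < x n)
    {a B : ℝ} (ha : 0 < a) (hlin : ∀ n, a * n ≤ x n + B) :
    ∃ C, 0 < C ∧ ∀ n, 1 ≤ n → C * n ≤ x n := by
  refine exists_pos_mul_le_of_eventually_mul_le hpos (half_pos ha) ?_
  filter_upwards [tendsto_natCast_atTop_atTop.eventually_ge_atTop (2 * B / a)] with n hn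
  have := (div_le_iff₀ ha).1 hn
  linarith [hlin n]

lemma exists_rpow_bounds_of_linear_bounds {x y : ℕ → ℝ} {p C₁ C₂ : ℝ} (hp : 0 < p)
    (hC₁ : 0 < C₁) (hx : ∀ n, 1 ≤ n → C₁ * n ≤ x n) (hy0 : ∀ n, 0 ≤ y n)
    (hy : ∀ n, 1 ≤ n → y n ≤ C₂ * n) :
    ∃ C : ℝ, 0 < C ∧ ∀ n : ℕ, 1 ≤ n →
      C⁻¹ * (n : ℝ) ^ (1 / p) ≤ x n ^ (1 / p) ∧
      y n ^ ((1 : ℝ) / 2) ≤ C * (n : ℝ) ^ ((1 : ℝ) / 2) := by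
  have hC₂ : 0 ≤ max C₂ 0 := le_max_right _ _
  refine ⟨max (C₁ ^ (1 / p))⁻¹ (max C₂ 0 ^ ((1 : ℝ) / 2)), lt_max_of_lt_left (by positivity),
    fun n hn => ⟨?_, ?_⟩⟩
  · calc _ ≤ C₁ ^ (1 / p) * (n : ℝ) ^ (1 / p) := by
          gcongr; exact inv_le_of_inv_le₀ (by positivity) (le_max_left _ _)
      _ = (C₁ * n) ^ (1 / p) := (Real.mul_rpow hC₁.le n.cast_nonneg).symm
      _ ≤ x n ^ (1 / p) := by gcongr; exact hx n hn
  · calc y n ^ ((1 : ℝ) / 2) ≤ (max C₂ 0 * n) ^ ((1 : ℝ) / 2) :=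
          Real.rpow_le_rpow (hy0 n) ((hy n hn).trans (by gcongr; exact le_max_left _ _))
            (by norm_num)
      _ = max C₂ 0 ^ ((1 : ℝ) / 2) * (n : ℝ) ^ ((1 : ℝ) / 2) :=
          Real.mul_rpow hC₂ n.cast_nonneg
      _ ≤ _ := by gcongr; exact le_max_right _ _

theorem cocycle_growth_of_harmonic_plus_bounded_general
    {G : Type*} [Group G] [TopologicalSpace G] [IsTopologicalGroup G]
    [LocallyCompactSpace G] [SecondCountableTopology G]
    [MeasurableSpace G] [BorelSpace G]
    (S : Set G) (hScpt : IsCompact S)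
    (hSgen : ∀ g : G, ∃ n : ℕ, g ∈ S ^ n)
    (μ : MeasureTheory.Measure G) (hμ : CohomologicallyAdapted S μ)
    (p c d : ℝ) (hp : 2 ≤ p) (hc : 0 < c)
    {E : Type*} [NormedAddCommGroup E] [NormedSpace ℝ E] [CompleteSpace E]
    (J : E → StrongDual ℝ E) (hJconv : IsConvexDualityMap p c J)
    (hJsmooth : ∀ x y : E, ‖x + y‖ ^ 2 ≤ ‖x‖ ^ 2 + 2 * J x y + d * ‖y‖ ^ 2)
    (π : G →* (E ≃ₗᵢ[ℝ] E))
    (b : G → E) (hb : Continuous b)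
    (hcoc : ∀ g h : G, b (g * h) = b g + π g (b h))
    (bh : G → E) (hbh : Continuous bh)
    (hbhcoc : ∀ g h : G, bh (g * h) = bh g + π g (bh h))
    (hharm : ∫ g, bh g ∂μ = 0)
    (hpos : 0 < ∫ g, ‖bh g‖ ^ p ∂μ)
    (hbdd : ∃ M : ℝ, ∀ g : G, ‖b g - bh g‖ ≤ M) :
    ∃ C : ℝ, 0 < C ∧ ∀ n : ℕ, 1 ≤ n →
      C⁻¹ * (n : ℝ) ^ (1 / p) ≤ (∫ g, ‖b g‖ ^ p ∂(convPow μ n)) ^ (1 / p) ∧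
      (∫ g, ‖b g‖ ^ 2 ∂(convPow μ n)) ^ ((1 : ℝ) / 2)
        ≤ C * (n : ℝ) ^ ((1 : ℝ) / 2) := by
  obtain ⟨M, hM⟩ := hbdd
  have := hμ.isProb
  have hp1 : 1 ≤ p := by linarith
  have hbh' : IsCocycle π bh := hbhcoc
  have hmom (q : ℝ) (hq : 1 ≤ q) : Integrable (fun g => ‖bh g‖ ^ q) μ :=
    hbh'.integrable_norm_rpow hbh hScpt hSgen (by linarith) (hμ.finiteMoments q hq)
  have hbh_int : Integrable bh μ :=
    (integrable_norm_iff hbh.aestronglyMeasurable).1 (by simpa using hmom 1 le_rfl)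
  have hbp (n : ℕ) : Integrable (fun g => ‖b g‖ ^ p) (convPow μ n) :=
    (integral_norm_rpow_le_of_norm_sub_le hp1 hb.aestronglyMeasurable
      (hbh'.integrable_norm_rpow_convPow hbh hp1 (hmom p hp1) n) hM).1
  set a := c * (∫ g, ‖bh g‖ ^ p ∂μ) / 2 ^ (p - 1)
  have ha : 0 < a := div_pos (mul_pos hc hpos) (by positivity)
  have hlow (n : ℕ) : a * n ≤ ∫ g, ‖b g‖ ^ p ∂convPow μ n + M ^ p := by
    rw [div_mul_eq_mul_div, div_le_iff₀' (by positivity), mul_comm _ (n : ℝ)]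
    exact (hbh'.le_integral_norm_rpow_convPow hJconv hp1 hbh hbh_int hharm (hmom p hp1) n).trans
      (integral_norm_rpow_le_of_norm_sub_le hp1 hbh.aestronglyMeasurable (hbp n)
        fun g => norm_sub_rev (b g) (bh g) ▸ hM g).2
  have hbpos (n : ℕ) (hn : 1 ≤ n) : 0 < ∫ g, ‖b g‖ ^ p ∂convPow μ n := by
    obtain ⟨g, hgS, hg⟩ := IsCocycle.exists_mem_pow_ne_zero hcoc hb hScpt hSgen
      (exists_lt_norm_of_mul_le_integral (by linarith) ha hlow) hn
    exact integral_norm_rpow_convPow_pos hμ.suppContains hb (by linarith) (hbp n) hgS hg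
  have hup (n : ℕ) (hn : 1 ≤ n) :
      ∫ g, ‖b g‖ ^ 2 ∂convPow μ n ≤ 2 * (d * ∫ g, ‖bh g‖ ^ 2 ∂μ + M ^ 2) * n := by
    have h1 := (integral_norm_rpow_le_of_norm_sub_le one_le_two hb.aestronglyMeasurable
      (hbh'.integrable_norm_rpow_convPow hbh one_le_two (hmom 2 one_le_two) n) hM).2
    have h2 := hbh'.integral_norm_sq_convPow_le hJsmooth hbh hbh_int hharm
      (by simpa using hmom 2 one_le_two) n
    have hn' : (1 : ℝ) ≤ n := by exact_mod_cast hn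
    norm_num at h1
    nlinarith [sq_nonneg M]
  obtain ⟨C₁, hC₁, hC₁n⟩ := exists_pos_mul_le_of_mul_le_add hbpos ha hlow
  exact exists_rpow_bounds_of_linear_bounds (by linarith) hC₁ hC₁n
    (fun n => integral_nonneg fun _ => by positivity) hup

theorem cocycle_growth_of_harmonic_plus_bounded
    {G : Type*} [Group G] [TopologicalSpace G] [IsTopologicalGroup G]
    [LocallyCompactSpace G] [SecondCountableTopology G]
    [MeasurableSpace G] [BorelSpace G]
    (S : Set G) (hScpt : IsCompact S) (hSsymm : S⁻¹ = S)
    (hSgen : ∀ g : G, ∃ n : ℕ, g ∈ S ^ n)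
    (μ : MeasureTheory.Measure G) (hμ : CohomologicallyAdapted S μ)
    (p c d : ℝ) (hp : 2 ≤ p) (hc : 0 < c) (hd : 0 < d)
    {E : Type*} [NormedAddCommGroup E] [NormedSpace ℝ E] [CompleteSpace E]
    (J : E → StrongDual ℝ E) (hJconv : IsConvexDualityMap p c J)
    (hJsmooth : ∀ x y : E, ‖x + y‖ ^ 2 ≤ ‖x‖ ^ 2 + 2 * J x y + d * ‖y‖ ^ 2)
    (π : G →* (E ≃ₗᵢ[ℝ] E)) (hπ : ∀ x : E, Continuous fun g : G => π g x)
    (b : G → E) (hb : Continuous b)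
    (hcoc : ∀ g h : G, b (g * h) = b g + π g (b h))
    (bh : G → E) (hbh : Continuous bh)
    (hbhcoc : ∀ g h : G, bh (g * h) = bh g + π g (bh h))
    (hharm : ∫ g, bh g ∂μ = 0)
    (hpos : 0 < ∫ g, ‖bh g‖ ^ p ∂μ)
    (hbdd : ∃ M : ℝ, ∀ g : G, ‖b g - bh g‖ ≤ M) :
    ∃ C : ℝ, 0 < C ∧ ∀ n : ℕ, 1 ≤ n →
      C⁻¹ * (n : ℝ) ^ (1 / p) ≤ (∫ g, ‖b g‖ ^ p ∂(convPow μ n)) ^ (1 / p) ∧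
      (∫ g, ‖b g‖ ^ 2 ∂(convPow μ n)) ^ ((1 : ℝ) / 2)
        ≤ C * (n : ℝ) ^ ((1 : ℝ) / 2) :=
  cocycle_growth_of_harmonic_plus_bounded_general S hScpt hSgen μ hμ p c d hp hc J hJconv hJsmooth π
    b hb hcoc bh hbh hbhcoc hharm hpos hbdd
end
end
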